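/- Let γ ∈ SL(2,ℂ) with ‖γ‖ > 1 and ‖γ‖⁴ ≥ 3/2, with Cartan south pole s and north pole n. Then γ maps the closed chordal disc of center s and radius ‖γ‖⁻² into the complement of the open chordal disc D(n, 1/2). -/

import Mathlib

open Complex Set

/-- Chordal distance on ℂP¹ = ℂ ∪ {∞}, modeled as `Option ℂ` (`none` = ∞). -/
noncomputable def chordal : Option ℂ → Option ℂ → ℝ
  | some z₁, some z₂ =>
      ‖z₁ - z₂‖ /
        (Real.sqrt (1 + ‖z₁‖ ^ 2) * Real.sqrt (1 + ‖z₂‖ ^ 2))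
  | some z, none => 1 / Real.sqrt (1 + ‖z‖ ^ 2)
  | none, some z => 1 / Real.sqrt (1 + ‖z‖ ^ 2)
  | none, none => 0

/-- Möbius action of a 2×2 complex matrix on ℂP¹. -/
noncomputable def mobius (g : Matrix (Fin 2) (Fin 2) ℂ) : Option ℂ → Option ℂ
  | some z => if g 1 0 * z + g 1 1 = 0 then none
              else some ((g 0 0 * z + g 0 1) / (g 1 0 * z + g 1 1))
  | none => if g 1 0 = 0 then none else some (g 0 0 / g 1 0)

/-- Operator norm of a 2×2 complex matrix acting on ℂ² with Euclidean norm. -/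
noncomputable def opNorm (g : Matrix (Fin 2) (Fin 2) ℂ) : ℝ :=
  ‖LinearMap.toContinuousLinearMap (Matrix.toEuclideanLin g)‖

/-- Membership in SU(2). -/
def SU2 (k : Matrix (Fin 2) (Fin 2) ℂ) : Prop := k.det = 1 ∧ k.conjTranspose * k = 1

/-- Open chordal disc. -/
def Dopen (z : Option ℂ) (α : ℝ) : Set (Option ℂ) := {w | chordal w z < α}

/-- Closed chordal disc. -/
def Dclosed (z : Option ℂ) (α : ℝ) : Set (Option ℂ) := {w | chordal w z ≤ α}
abbrev SL2 := Matrix.SpecialLinearGroup (Fin 2) ℂ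

/-!
A point of ℂP¹ is a line `[u]` in ℂ², and the chordal distance is
`d([u], [v]) = |u ∧ v| / (‖u‖ ‖v‖)`. Matrices of SU(2) preserve both the Hermitian norm and the
wedge, so they act on ℂP¹ by chordal isometries. Conjugating by `k'` and `k` therefore reduces the
claim to `a = diag(λ, λ⁻¹)`, the south pole `0` and the north pole `∞`: a point `z` with
`d(z, 0) = |z| / √(1 + |z|²) ≤ ‖γ‖⁻²` has `|z|² (‖γ‖⁴ - 1) ≤ 1`, hence `|z|² ≤ 2` as `‖γ‖⁴ ≥ 3/2`,
and its image `λ² z` has `|λ² z|² ≤ ‖γ‖⁴ |z|² ≤ 1 + |z|² ≤ 3`, i.e. `d(λ² z, ∞) ≥ 1/2`.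
Here `|λ| ≤ ‖γ‖` because `γ` maps the unit vector `k'⁻¹ e₁` to `k (λ e₁)`.
-/

open Matrix

local notation "ℂ²" => EuclideanSpace ℂ (Fin 2)
local notation "toCLM" => toEuclideanCLM (n := Fin 2) (𝕜 := ℂ)

def homog : Option ℂ → ℂ²
  | some z => !₂[z, 1]
  | none => !₂[1, 0]

noncomputable def proj (u : ℂ²) : Option ℂ :=
  if u 1 = 0 then none else some (u 0 / u 1)

def wedge (u v : ℂ²) : ℂ := u 0 * v 1 - u 1 * v 0

lemma wedge_smul_smul (a b : ℂ) (u v : ℂ²) : wedge (a • u) (b • v) = a * b * wedge u v := by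
  simp only [wedge, PiLp.smul_apply, smul_eq_mul]; ring

lemma wedge_toCLM (g : Matrix (Fin 2) (Fin 2) ℂ) (u v : ℂ²) :
    wedge (toCLM g u) (toCLM g v) = g.det * wedge u v := by
  simp only [wedge, ofLp_toEuclideanCLM, mulVec, dotProduct, Fin.sum_univ_two, det_fin_two]
  ring

lemma homog_ne_zero (p : Option ℂ) : homog p ≠ 0 := by
  intro h
  cases p with
  | none => simpa [homog] using congrArg (· 0) h
  | some z => simpa [homog] using congrArg (· 1) h

lemma homog_proj {u : ℂ²} (hu : u ≠ 0) : ∃ c : ℂ, c ≠ 0 ∧ homog (proj u) = c • u := by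
  by_cases h1 : u 1 = 0
  · have h0 : u 0 ≠ 0 := fun h0 => hu (by ext i; fin_cases i <;> simp [h0, h1])
    refine ⟨(u 0)⁻¹, inv_ne_zero h0, ?_⟩
    ext i; fin_cases i <;> simp [proj, homog, h0, h1]
  · refine ⟨(u 1)⁻¹, inv_ne_zero h1, ?_⟩
    ext i; fin_cases i <;> simp [proj, homog, h1, div_eq_inv_mul]

lemma mobius_eq_proj (g : Matrix (Fin 2) (Fin 2) ℂ) (p : Option ℂ) :
    mobius g p = proj (toCLM g (homog p)) := by
  cases p <;> simp [mobius, proj, homog]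

lemma chordal_eq_wedge (p q : Option ℂ) :
    chordal p q = ‖wedge (homog p) (homog q)‖ / (‖homog p‖ * ‖homog q‖) := by
  cases p <;> cases q <;>
    simp [chordal, wedge, homog, EuclideanSpace.norm_eq, Fin.sum_univ_two, add_comm]

lemma chordal_proj_proj {u v : ℂ²} (hu : u ≠ 0) (hv : v ≠ 0) :
    chordal (proj u) (proj v) = ‖wedge u v‖ / (‖u‖ * ‖v‖) := by
  obtain ⟨a, ha, hau⟩ := homog_proj hu
  obtain ⟨b, hb, hbv⟩ := homog_proj hv
  rw [chordal_eq_wedge, hau, hbv, wedge_smul_smul, norm_smul, norm_smul, norm_mul, norm_mul]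
  have : ‖a‖ * ‖b‖ ≠ 0 := by positivity
  rw [show ‖a‖ * ‖u‖ * (‖b‖ * ‖v‖) = ‖a‖ * ‖b‖ * (‖u‖ * ‖v‖) by ring,
    mul_div_mul_left _ _ this]

lemma toCLM_ne_zero {h : Matrix (Fin 2) (Fin 2) ℂ} (hh : IsUnit h.det) {u : ℂ²} (hu : u ≠ 0) :
    toCLM h u ≠ 0 := by
  intro h0
  apply hu
  simpa [← mul_apply_eq_comp, ← map_mul, nonsing_inv_mul h hh] using
    congrArg (toCLM h⁻¹) h0

lemma proj_smul {c : ℂ} (hc : c ≠ 0) (u : ℂ²) : proj (c • u) = proj u := by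
  by_cases h1 : u 1 = 0 <;> simp [proj, h1, hc, mul_div_mul_left]

lemma mobius_mul (g : Matrix (Fin 2) (Fin 2) ℂ) {h : Matrix (Fin 2) (Fin 2) ℂ}
    (hh : IsUnit h.det) (p : Option ℂ) : mobius (g * h) p = mobius g (mobius h p) := by
  obtain ⟨c, hc, hcu⟩ := homog_proj (toCLM_ne_zero hh (homog_ne_zero p))
  rw [mobius_eq_proj, mobius_eq_proj g, mobius_eq_proj h, hcu, map_smul, proj_smul hc, map_mul,
    mul_apply_eq_comp]

lemma mobius_one (p : Option ℂ) : mobius 1 p = p := by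
  cases p <;> simp [mobius]

lemma SU2.mem_unitaryGroup {k : Matrix (Fin 2) (Fin 2) ℂ} (hk : SU2 k) :
    k ∈ unitaryGroup (Fin 2) ℂ :=
  mem_unitaryGroup_iff'.2 hk.2

lemma norm_toCLM_of_mem_unitaryGroup {k : Matrix (Fin 2) (Fin 2) ℂ}
    (hk : k ∈ unitaryGroup (Fin 2) ℂ) (u : ℂ²) : ‖toCLM k u‖ = ‖u‖ :=
  ContinuousLinearMap.norm_map_of_mem_unitary (Unitary.map_mem _ hk) u

lemma SU2.norm_toCLM {k : Matrix (Fin 2) (Fin 2) ℂ} (hk : SU2 k) (u : ℂ²) :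
    ‖toCLM k u‖ = ‖u‖ :=
  norm_toCLM_of_mem_unitaryGroup hk.mem_unitaryGroup u

lemma SU2.chordal_mobius {k : Matrix (Fin 2) (Fin 2) ℂ} (hk : SU2 k) (p q : Option ℂ) :
    chordal (mobius k p) (mobius k q) = chordal p q := by
  have hne (r : Option ℂ) : toCLM k (homog r) ≠ 0 :=
    norm_ne_zero_iff.1 (by rw [hk.norm_toCLM]; exact norm_ne_zero_iff.2 (homog_ne_zero r))
  rw [mobius_eq_proj, mobius_eq_proj, chordal_proj_proj (hne p) (hne q), wedge_toCLM, hk.1,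
    one_mul, hk.norm_toCLM, hk.norm_toCLM, chordal_eq_wedge]

lemma SU2.mobius_mobius_inv {k : Matrix (Fin 2) (Fin 2) ℂ} (hk : SU2 k) (p : Option ℂ) :
    mobius k (mobius k⁻¹ p) = p := by
  have hdet : IsUnit k.det := by simp [hk.1]
  rw [← mobius_mul _ (isUnit_nonsing_inv_det k hdet), mul_nonsing_inv k hdet, mobius_one]

lemma mobius_diagonal_some {lam : ℂ} (hlam : lam ≠ 0) (z : ℂ) :
    mobius (diagonal ![lam, lam⁻¹]) (some z) = some (lam ^ 2 * z) := by
  simp [mobius, hlam, sq, mul_comm, mul_left_comm]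

lemma chordal_some_zero (z : ℂ) : chordal (some z) (some 0) = ‖z‖ / √(1 + ‖z‖ ^ 2) := by
  simp [chordal]

lemma chordal_some_none (z : ℂ) : chordal (some z) none = 1 / √(1 + ‖z‖ ^ 2) := rfl

lemma one_half_le_chordal_mobius_diagonal_none {L : ℝ} (hL : 3 / 2 ≤ L ^ 4) {lam : ℂ}
    (hlam : lam ≠ 0) (hlamL : ‖lam‖ ≤ L) {p : Option ℂ} (hp : chordal p (some 0) ≤ (L ^ 2)⁻¹) :
    1 / 2 ≤ chordal (mobius (diagonal ![lam, lam⁻¹]) p) none := by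
  have hL2 : 1 < L ^ 2 := by nlinarith
  cases p with
  | none =>
    have h1 : chordal none (some 0) = 1 := by simp [chordal]
    have : (L ^ 2)⁻¹ < 1 := inv_lt_one_of_one_lt₀ hL2
    linarith
  | some z =>
    rw [mobius_diagonal_some hlam, chordal_some_none, norm_mul, norm_pow]
    rw [chordal_some_zero, div_le_iff₀ (by positivity)] at hp
    set t := ‖z‖
    have hsq : (L ^ 2 * t) ^ 2 ≤ 1 + t ^ 2 := by
      have := pow_le_pow_left₀ (by positivity) ((le_inv_mul_iff₀ (by positivity)).1 hp) 2
      rwa [Real.sq_sqrt (by positivity)] at this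
    have ht : t ^ 2 ≤ 2 := by nlinarith
    have h3 : (‖lam‖ ^ 2 * t) ^ 2 ≤ 3 := by
      have : ‖lam‖ ^ 4 ≤ L ^ 4 := pow_le_pow_left₀ (norm_nonneg _) hlamL 4
      nlinarith
    rw [one_div_le_one_div (by norm_num) (by positivity), Real.sqrt_le_iff]
    constructor <;> linarith

lemma toCLM_diagonal_single_zero (lam : ℂ) :
    toCLM (diagonal ![lam, lam⁻¹]) (EuclideanSpace.single 0 1)
      = lam • EuclideanSpace.single 0 1 := by
  ext i; fin_cases i <;> simp

lemma norm_le_opNorm_of_eq_mul_diagonal_mul {g k k' : Matrix (Fin 2) (Fin 2) ℂ} {lam : ℂ}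
    (hk : SU2 k) (hk' : SU2 k') (hg : g = k * diagonal ![lam, lam⁻¹] * k') :
    ‖lam‖ ≤ opNorm g := by
  have hk'H : k'ᴴ ∈ unitaryGroup (Fin 2) ℂ := Unitary.star_mem hk'.mem_unitaryGroup
  have hgk' : g * k'ᴴ = k * diagonal ![lam, lam⁻¹] := by
    rw [hg, Matrix.mul_assoc _ k', mul_eq_one_comm.2 hk'.2, Matrix.mul_one]
  have himage : toCLM g (toCLM k'ᴴ (EuclideanSpace.single 0 1))
      = toCLM k (lam • EuclideanSpace.single 0 1) := by
    rw [← mul_apply_eq_comp, ← map_mul, hgk', map_mul, mul_apply_eq_comp,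
      toCLM_diagonal_single_zero]
  change ‖lam‖ ≤ ‖toCLM g‖
  simpa [himage, hk.norm_toCLM, norm_smul, norm_toCLM_of_mem_unitaryGroup hk'H] using
    (toCLM g).le_opNorm (toCLM k'ᴴ (EuclideanSpace.single 0 1))

theorem sl2_contracts_small_disc_general (γ : SL2)
    (hγ4 : 3/2 ≤ opNorm ↑γ ^ 4)
    (k k' : Matrix (Fin 2) (Fin 2) ℂ) (lam : ℂ)
    (hk : SU2 k) (hk' : SU2 k') (hlam : 1 ≤ ‖lam‖)
    (hdec : (↑γ : Matrix (Fin 2) (Fin 2) ℂ) = k * Matrix.diagonal ![lam, lam⁻¹] * k')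
    (s n : Option ℂ) (hs : s = mobius k'⁻¹ (some 0)) (hn : n = mobius k none) :
    mobius ↑γ '' Dclosed s ((opNorm ↑γ ^ 2)⁻¹) ⊆ (Dopen n (1/2))ᶜ := by
  rintro _ ⟨w, hw, rfl⟩
  have hlam0 : lam ≠ 0 := norm_pos_iff.1 (one_pos.trans_le hlam)
  have hw' : chordal (mobius k' w) (some 0) ≤ (opNorm ↑γ ^ 2)⁻¹ := by
    rwa [← hk'.mobius_mobius_inv (some 0), hk'.chordal_mobius, ← hs]
  have himage : mobius ↑γ w = mobius k (mobius (diagonal ![lam, lam⁻¹]) (mobius k' w)) := by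
    rw [hdec, mobius_mul _ (by simp [hk'.1]), mobius_mul _ (by simp [hlam0])]
  simp only [Dopen, mem_compl_iff, mem_ofPred_eq, not_lt]
  rw [himage, hn, hk.chordal_mobius]
  exact one_half_le_chordal_mobius_diagonal_none hγ4 hlam0
    (norm_le_opNorm_of_eq_mul_diagonal_mul hk hk' hdec) hw'

theorem sl2_contracts_small_disc (γ : SL2) (hγ : 1 < opNorm ↑γ)
    (hγ4 : 3/2 ≤ opNorm ↑γ ^ 4)
    (k k' : Matrix (Fin 2) (Fin 2) ℂ) (lam : ℂ)
    (hk : SU2 k) (hk' : SU2 k') (hlam : 1 ≤ ‖lam‖)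
    (hdec : (↑γ : Matrix (Fin 2) (Fin 2) ℂ) = k * Matrix.diagonal ![lam, lam⁻¹] * k')
    (s n : Option ℂ) (hs : s = mobius k'⁻¹ (some 0)) (hn : n = mobius k none) :
    mobius ↑γ '' Dclosed s ((opNorm ↑γ ^ 2)⁻¹) ⊆ (Dopen n (1/2))ᶜ :=
  sl2_contracts_small_disc_general γ hγ4 k k' lam hk hk' hlam hdec s n hs hn
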